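/- Let G be a group, B a subgroup of G, and C a subgroup of B which is self-normalizing in G (N_G(C) = C). Assume that for every g ∈ G with C ≤ B^g there exists u ∈ B^g such that C^{gu} = C. Then for every g ∈ G, C ≤ B^g implies g ∈ B. Consequently B is the unique G-conjugate of B containing C, and C^g ≠ C for every g ∈ G ∖ N_G(B). -/

import Mathlib

/-!
If `C ≤ B^g` and `C^{gu} = C` with `u ∈ B^g`, then `gu ∈ N_G(C) = C ≤ B` and `gug⁻¹ ∈ B`,
so `g = (gug⁻¹)⁻¹ (gu) ∈ B ≤ N_G(B)`.
-/

open Pointwise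

/-- The conjugate `H^g = g⁻¹ * H * g` of a subgroup `H` by an element `g`. -/
def conjSub {G : Type*} [Group G] (H : Subgroup G) (g : G) : Subgroup G :=
  H.map (MulAut.conj g⁻¹).toMonoidHom

section ConjSub

variable {G : Type*} [Group G] {H : Subgroup G} {g u x : G}

lemma mem_conjSub : x ∈ conjSub H g ↔ g * x * g⁻¹ ∈ H := by
  constructor
  · rintro ⟨h, hh, rfl⟩
    simpa [mul_assoc] using hh
  · intro hx
    exact ⟨g * x * g⁻¹, hx, by simp [mul_assoc]⟩

lemma conjSub_eq_self_iff : conjSub H g = H ↔ g ∈ Subgroup.normalizer (H : Set G) := by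
  simp only [SetLike.ext_iff, mem_conjSub, Subgroup.mem_normalizer_iff]
  exact ⟨fun h x => (h x).symm, fun h x => (h x).symm⟩

lemma mem_of_mem_conjSub_of_mul_mem (hu : u ∈ conjSub H g) (hgu : g * u ∈ H) : g ∈ H := by
  have hg : g = (g * u * g⁻¹)⁻¹ * (g * u) := by group
  rw [hg]
  exact H.mul_mem (H.inv_mem (mem_conjSub.mp hu)) hgu

end ConjSub

/-- Let `G` be a group, `B` a subgroup of `G`, and `C` a subgroup of `B` which is
self-normalizing in `G` (`N_G(C) = C`).  Assume that for every `g ∈ G` with `C ≤ B^g`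
there exists `u ∈ B^g` such that `C^{gu} = C`.  Then for every `g ∈ G`, `C ≤ B^g`
implies `g ∈ B`.  Consequently `B` is the unique `G`-conjugate of `B` containing `C`,
and `C^g ≠ C` for every `g ∈ G ∖ N_G(B)`. -/
theorem unique_conjugate_containing_selfnormalizing {G : Type*} [Group G]
    (B C : Subgroup G) (hCB : C ≤ B)
    (hself : Subgroup.normalizer (C : Set G) = C)
    (hconj : ∀ g : G, C ≤ conjSub B g → ∃ u ∈ conjSub B g, conjSub C (g * u) = C) :
    (∀ g : G, C ≤ conjSub B g → g ∈ B) ∧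
      (∀ g : G, C ≤ conjSub B g → conjSub B g = B) ∧
      (∀ g : G, g ∉ Subgroup.normalizer (B : Set G) → conjSub C g ≠ C) := by
  have hNC : Subgroup.normalizer (C : Set G) ≤ B := hself.le.trans hCB
  have mem_of_le : ∀ g : G, C ≤ conjSub B g → g ∈ B := fun g hg => by
    obtain ⟨u, hu, hgu⟩ := hconj g hg
    exact mem_of_mem_conjSub_of_mul_mem hu (hNC (conjSub_eq_self_iff.mp hgu))
  refine ⟨mem_of_le, fun g hg => conjSub_eq_self_iff.mpr (B.le_normalizer (mem_of_le g hg)),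
    fun g hgB hgC => hgB ?_⟩
  exact B.le_normalizer (hNC (conjSub_eq_self_iff.mp hgC))
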